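/- Let f, g : [−1;2] → ℝ² be continuous with a common modulus of uniform continuity md, let I = [a_I;b_I], J ⊆ [−1;2] be closed intervals with α_IJ > 0, and let a_I < c < b_I with f(c) ∉ g(J). Set I₁ := [a_I;c] and I₂ := [c;b_I]. Then π(f|_I, g|_J) = (π(f|_{I₁}, g|_J) + π(f|_{I₂}, g|_J)) mod 2. -/

import Mathlib

/-!
The parity hypotheses quantify over all approximations, so it suffices to exhibit one good
configuration. Since `f c` has positive distance from the compact set `g(J)`, the subintervals
`I₁` and `I₂` still have `α > 0`, and one precision `n` serves all three pairs. Take an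
approximation `p` of `f|_I` having `c` among its parameters and an approximation `q` of `g|_J`,
with all vertices perturbed into general position so that `p ⋈ q`; cutting `p` at `c` gives
approximations of `f|_{I₁}` and `f|_{I₂}`. For weakly separated tracks every intersection is a
transversal crossing, there are finitely many, and none lies at a vertex; so the crossings of `p`
with `q` are exactly those of its two pieces, and the parities add.
-/

noncomputable section

abbrev Plane := EuclideanSpace ℝ (Fin 2)

def pt (a b : ℝ) : Plane := WithLp.toLp 2 ![a, b]

def unitSquare : Set Plane := {z | z 0 ∈ Set.Icc (0:ℝ) 1 ∧ z 1 ∈ Set.Icc (0:ℝ) 1}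

structure Track where
  k : ℕ
  s : ℕ → ℝ
  x : ℕ → Plane
  mono : ∀ i < k, s i < s (i + 1)
  ne : ∀ i < k, x i ≠ x (i + 1)

def Track.seg (p : Track) (t : ℝ) : ℕ := sSup {i | i < p.k ∧ p.s i ≤ t}

def Track.path (p : Track) (t : ℝ) : Plane :=
  p.x (p.seg t) + ((t - p.s (p.seg t)) / (p.s (p.seg t + 1) - p.s (p.seg t))) •
    (p.x (p.seg t + 1) - p.x (p.seg t))

def Track.rangeSet (p : Track) : Set Plane := p.path '' Set.Icc (p.s 0) (p.s p.k)

def Track.V (p : Track) : Set Plane := {z | ∃ i ≤ p.k, z = p.x i}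

def line (x y : Plane) : Set Plane := (affineSpan ℝ {x, y} : Set Plane)

def Track.L (p : Track) : Set Plane := {z | ∃ i < p.k, z ∈ line (p.x i) (p.x (i + 1))}

def Track.Lbar (p : Track) : Set Plane :=
  {z | ∃ i ≤ p.k, ∃ j ≤ p.k, p.x i ≠ p.x j ∧ z ∈ line (p.x i) (p.x j)}

def IsSegSet (S : Set Plane) : Prop := ∃ x y : Plane, x ≠ y ∧ S = segment ℝ x y

def NoCommonSegment (p q : Track) : Prop :=
  ¬ ∃ S : Set Plane, IsSegSet S ∧ S ⊆ p.rangeSet ∧ S ⊆ q.rangeSet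

def WSep (p q : Track) : Prop := p.V ∩ q.L = ∅ ∧ q.V ∩ p.L = ∅

def IsInter (p q : Track) (s t : ℝ) : Prop :=
  p.s 0 < s ∧ s < p.s p.k ∧ q.s 0 < t ∧ t < q.s q.k ∧ p.path s = q.path t

def Admissible (p q : Track) (x : Plane) (δ : ℝ) : Prop :=
  0 < δ ∧ ∀ v ∈ p.V ∪ q.V, v ∈ Metric.ball x δ → v = x

def entryParam (p : Track) (s δ : ℝ) (x : Plane) : ℝ :=
  sInf {s' | s' < s ∧ p.path '' Set.Icc s' s ⊆ Metric.ball x δ}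

def exitParam (p : Track) (s δ : ℝ) (x : Plane) : ℝ :=
  sSup {s' | s < s' ∧ p.path '' Set.Icc s s' ⊆ Metric.ball x δ}

def Alternates (x : Plane) (δ : ℝ) (a b c d : Plane) : Prop :=
  c ∈ Metric.sphere x δ \ {a, b} ∧ d ∈ Metric.sphere x δ \ {a, b} ∧
  connectedComponentIn (Metric.sphere x δ \ {a, b}) c ≠
    connectedComponentIn (Metric.sphere x δ \ {a, b}) d

def CrossAt (p q : Track) (s t δ : ℝ) : Prop :=
  Alternates (p.path s) δ
    (p.path (entryParam p s δ (p.path s))) (p.path (exitParam p s δ (p.path s)))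
    (q.path (entryParam q t δ (p.path s))) (q.path (exitParam q t δ (p.path s)))

def IsCrossing (p q : Track) (s t : ℝ) : Prop :=
  IsInter p q s t ∧ ∃ δ : ℝ, Admissible p q (p.path s) δ ∧ CrossAt p q s t δ

def CN (p q : Track) : ℕ := {st : ℝ × ℝ | IsCrossing p q st.1 st.2}.ncard

def par (p q : Track) : ℕ := CN p q % 2

def ds (A B : Set Plane) : ℝ := sInf {r | ∃ a ∈ A, ∃ b ∈ B, r = ‖a - b‖}

def alphaIJ (f g : ℝ → Plane) (aI bI aJ bJ : ℝ) : ℝ :=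
  min (ds {f aI, f bI} (g '' Set.Icc aJ bJ)) (ds {g aJ, g bJ} (f '' Set.Icc aI bI))

def IsModulus2 (f g : ℝ → Plane) (md : ℕ → ℕ) : Prop :=
  Monotone md ∧ ∀ n : ℕ, ∀ t ∈ Set.Icc (-1:ℝ) 2, ∀ t' ∈ Set.Icc (-1:ℝ) 2,
    |t - t'| < (2:ℝ) ^ (-(md n : ℤ)) →
    ‖f t - f t'‖ < (2:ℝ) ^ (-(n : ℤ)) ∧ ‖g t - g t'‖ < (2:ℝ) ^ (-(n : ℤ))

def IsApprox (f : ℝ → Plane) (md : ℕ → ℕ) (a b : ℝ) (n : ℕ) (p : Track) : Prop :=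
  p.s 0 = a ∧ p.s p.k = b ∧
  (∀ i < p.k, p.s (i + 1) - p.s i < (2:ℝ) ^ (-(md n : ℤ))) ∧
  (∀ i ≤ p.k, ‖f (p.s i) - p.x i‖ < (2:ℝ) ^ (-(n : ℤ)))

def ParityIs (f g : ℝ → Plane) (md : ℕ → ℕ) (aI bI aJ bJ : ℝ) (b : ℕ) : Prop :=
  ∀ n : ℕ, (2:ℝ) ^ (-(n : ℤ)) < alphaIJ f g aI bI aJ bJ / 16 →
    ∀ p q : Track, IsApprox f md aI bI n p → IsApprox g md aJ bJ n q → WSep p q →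
      par p q = b

def IsModulus1 (f : ℝ → Plane) (md : ℕ → ℕ) : Prop :=
  Monotone md ∧ ∀ n : ℕ, ∀ t ∈ Set.Icc (-1:ℝ) 2, ∀ t' ∈ Set.Icc (-1:ℝ) 2,
    |t - t'| < (2:ℝ) ^ (-(md n : ℤ)) → ‖f t - f t'‖ < (2:ℝ) ^ (-(n : ℤ))

def nbhdU (A : Set Plane) (δ : ℝ) : Set Plane := {x | ∃ y ∈ A, ‖x - y‖ < δ}

def extF (φ : ℝ → Plane) (t : ℝ) : Plane :=
  if t ≤ 0 then pt t 0 else if t ≤ 1 then φ t else pt t 1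

def extG (ψ : ℝ → Plane) (t : ℝ) : Plane :=
  if t ≤ 0 then pt t 1 else if t ≤ 1 then ψ t else pt t 0

namespace Track

variable (p : Track)

lemma s_strictMonoOn : StrictMonoOn p.s (Set.Iic p.k) :=
  strictMonoOn_Iic_of_lt_succ fun i hi => p.mono i hi

lemma s_le_s {i j : ℕ} (hij : i ≤ j) (hj : j ≤ p.k) : p.s i ≤ p.s j :=
  p.s_strictMonoOn.monotoneOn (Set.mem_Iic.mpr (hij.trans hj)) (Set.mem_Iic.mpr hj) hij

lemma seg_spec {t : ℝ} (h0 : p.s 0 ≤ t) (hk : t < p.s p.k) :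
    p.seg t < p.k ∧ p.s (p.seg t) ≤ t ∧ t < p.s (p.seg t + 1) := by
  have hk0 : 0 < p.k := Nat.pos_of_ne_zero fun h => by rw [h] at hk; linarith
  have hbdd : BddAbove {i | i < p.k ∧ p.s i ≤ t} := ⟨p.k, fun i hi => hi.1.le⟩
  have hne : {i | i < p.k ∧ p.s i ≤ t}.Nonempty := ⟨0, hk0, h0⟩
  obtain ⟨hlt, hle⟩ : p.seg t < p.k ∧ p.s (p.seg t) ≤ t := Nat.sSup_mem hne hbdd
  refine ⟨hlt, hle, lt_of_not_ge fun hge => ?_⟩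
  rcases (Nat.succ_le_of_lt hlt).lt_or_eq with h | h
  · exact (Nat.lt_succ_self _).not_ge (le_csSup hbdd ⟨h, hge⟩)
  · rw [show p.seg t + 1 = p.k from h] at hge
    linarith

lemma seg_eq {t : ℝ} {i : ℕ} (hi : i < p.k) (h1 : p.s i ≤ t) (h2 : t < p.s (i + 1)) :
    p.seg t = i := by
  obtain ⟨hlt, hle, hgt⟩ := p.seg_spec ((p.s_le_s (Nat.zero_le i) hi.le).trans h1)
    (h2.trans_le (p.s_le_s hi le_rfl))
  rcases lt_trichotomy (p.seg t) i with h | h | h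
  · linarith [p.s_le_s (Nat.succ_le_of_lt h) hi.le]
  · exact h
  · linarith [p.s_le_s (Nat.succ_le_of_lt h) hlt.le]

def dir (t : ℝ) : Plane := p.x (p.seg t + 1) - p.x (p.seg t)

lemma dir_ne_zero {t : ℝ} (h0 : p.s 0 ≤ t) (hk : t < p.s p.k) : p.dir t ≠ 0 :=
  sub_ne_zero.mpr (p.ne _ (p.seg_spec h0 hk).1).symm

lemma path_sub_x_seg (t : ℝ) :
    p.path t - p.x (p.seg t) =
      ((t - p.s (p.seg t)) / (p.s (p.seg t + 1) - p.s (p.seg t))) • p.dir t :=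
  add_sub_cancel_left _ _

lemma path_sub_x_seg_succ {t : ℝ} (h0 : p.s 0 ≤ t) (hk : t < p.s p.k) :
    p.path t - p.x (p.seg t + 1) =
      ((t - p.s (p.seg t + 1)) / (p.s (p.seg t + 1) - p.s (p.seg t))) • p.dir t := by
  have hΔ : p.s (p.seg t + 1) - p.s (p.seg t) ≠ 0 :=
    (sub_pos.mpr (p.mono _ (p.seg_spec h0 hk).1)).ne'
  have hcoef : (t - p.s (p.seg t + 1)) / (p.s (p.seg t + 1) - p.s (p.seg t)) =
      (t - p.s (p.seg t)) / (p.s (p.seg t + 1) - p.s (p.seg t)) - 1 := by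
    field_simp
    ring
  rw [show p.x (p.seg t + 1) = p.x (p.seg t) + p.dir t by simp [dir], ← sub_sub,
    path_sub_x_seg, hcoef, sub_smul, one_smul]

lemma path_eq {t : ℝ} {i : ℕ} (hi : i < p.k) (h1 : p.s i ≤ t) (h2 : t < p.s (i + 1)) :
    p.path t = p.x i + ((t - p.s i) / (p.s (i + 1) - p.s i)) • (p.x (i + 1) - p.x i) := by
  rw [Track.path, p.seg_eq hi h1 h2]

lemma path_s {i : ℕ} (hi : i < p.k) : p.path (p.s i) = p.x i := by
  simp [p.path_eq hi le_rfl (p.mono i hi)]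

lemma path_sub_path {s u : ℝ} (hs0 : p.s 0 ≤ s) (hsk : s < p.s p.k)
    (hu1 : p.s (p.seg s) ≤ u) (hu2 : u < p.s (p.seg s + 1)) :
    p.path u - p.path s = ((u - s) / (p.s (p.seg s + 1) - p.s (p.seg s))) • p.dir s := by
  rw [p.path_eq (p.seg_spec hs0 hsk).1 hu1 hu2, Track.path, add_sub_add_left_eq_sub, ← sub_smul,
    div_sub_div_same, sub_sub_sub_cancel_right, dir]

lemma path_mem_line (t : ℝ) :
    p.path t ∈ line (p.x (p.seg t)) (p.x (p.seg t + 1)) := by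
  have h := AffineMap.lineMap_mem_affineSpan_pair
    ((t - p.s (p.seg t)) / (p.s (p.seg t + 1) - p.s (p.seg t))) (p.x (p.seg t)) (p.x (p.seg t + 1))
  rw [AffineMap.lineMap_apply_module', add_comm (_ • _)] at h
  exact h

lemma path_mem_L {t : ℝ} (h0 : p.s 0 ≤ t) (hk : t < p.s p.k) : p.path t ∈ p.L :=
  ⟨p.seg t, (p.seg_spec h0 hk).1, p.path_mem_line t⟩

lemma eq_of_path_eq {s u : ℝ} (hs0 : p.s 0 ≤ s) (hsk : s < p.s p.k) (hu0 : p.s 0 ≤ u)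
    (huk : u < p.s p.k) (hseg : p.seg s = p.seg u) (h : p.path s = p.path u) : s = u := by
  obtain ⟨hi, -, -⟩ := p.seg_spec hs0 hsk
  obtain ⟨-, hu1, hu2⟩ := p.seg_spec hu0 huk
  rw [← hseg] at hu1 hu2
  have h0 := p.path_sub_path hs0 hsk hu1 hu2
  rw [← h, sub_self, eq_comm, smul_eq_zero] at h0
  have hΔ : p.s (p.seg s + 1) - p.s (p.seg s) ≠ 0 := (sub_pos.mpr (p.mono _ hi)).ne'
  rcases h0 with h0 | h0
  · rw [div_eq_zero_iff, or_iff_left hΔ, sub_eq_zero] at h0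
    exact h0.symm
  · exact absurd h0 (p.dir_ne_zero hs0 hsk)

lemma finite_V : p.V.Finite :=
  ((Set.finite_Iic p.k).image p.x).subset fun _ ⟨i, hi, hz⟩ => ⟨i, hi, hz.symm⟩

end Track

lemma mem_line_of_parallel {a b c d x : Plane} {μ : ℝ} (hμ : μ ≠ 0) (hpar : d - c = μ • (b - a))
    (hx₁ : x ∈ line a b) (hx₂ : x ∈ line c d) : a ∈ line c d := by
  have hdir : c - d = μ • (a - b) := by
    rw [← neg_sub, hpar, ← smul_neg, neg_sub]
  have heq : affineSpan ℝ {a, b} = affineSpan ℝ ({c, d} : Set Plane) := by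
    refine AffineSubspace.ext_of_direction_eq ?_ ⟨x, hx₁, hx₂⟩
    rw [direction_affineSpan, direction_affineSpan, vectorSpan_pair, vectorSpan_pair, vsub_eq_sub,
      vsub_eq_sub, hdir, Submodule.span_singleton_smul_eq (IsUnit.mk0 μ hμ)]
  change a ∈ affineSpan ℝ ({c, d} : Set Plane)
  exact heq ▸ left_mem_affineSpan_pair ℝ a b

lemma mem_line_of_two_mem {a b c d x y : Plane} (hxy : x ≠ y) (hx₁ : x ∈ line a b)
    (hy₁ : y ∈ line a b) (hx₂ : x ∈ line c d) (hy₂ : y ∈ line c d) : a ∈ line c d :=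
  affineSpan_pair_le_of_mem_of_mem hx₂ hy₂ <|
    (collinear_insert_insert_of_mem_affineSpan_pair hx₁ hy₁).mem_affineSpan_of_mem_of_ne
      (by simp) (by simp) (by simp) hxy

lemma exists_pos_forall_le_dist {X : Type*} [PseudoMetricSpace X] {K : Set X} {x : X}
    (hK : IsClosed K) (hx : x ∉ K) : ∃ ε > 0, ∀ y ∈ K, ε ≤ dist x y := by
  obtain ⟨ε, hε, hball⟩ := Metric.isOpen_iff.mp hK.isOpen_compl x hx
  exact ⟨ε, hε, fun y hy => not_lt.mp fun h => hball (Metric.mem_ball'.mpr h) hy⟩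

def cross (u v : Plane) : ℝ := u 0 * v 1 - u 1 * v 0

lemma exists_eq_smul_of_cross_eq_zero {u v : Plane} (hu : u ≠ 0) (h : cross u v = 0) :
    ∃ μ : ℝ, v = μ • u := by
  unfold cross at h
  by_cases h0 : u 0 = 0
  · have h1 : u 1 ≠ 0 := fun h1 => hu (by ext i; fin_cases i <;> simp [h0, h1])
    refine ⟨v 1 / u 1, ?_⟩
    ext i
    fin_cases i
    · simp only [Fin.zero_eta, PiLp.smul_apply, smul_eq_mul]
      field_simp
      linear_combination -h
    · simp [h1]
  · refine ⟨v 0 / u 0, ?_⟩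
    ext i
    fin_cases i
    · simp [h0]
    · simp only [Fin.mk_one, PiLp.smul_apply, smul_eq_mul]
      field_simp
      linear_combination h

lemma add_smul_mem_sphere (x : Plane) {D : Plane} {δ c : ℝ} (hD : D ≠ 0) (hc : |c| = δ / ‖D‖) :
    x + c • D ∈ Metric.sphere x δ := by
  rw [mem_sphere_iff_norm, add_sub_cancel_left, norm_smul, Real.norm_eq_abs, hc,
    div_mul_cancel₀ _ (norm_ne_zero_iff.mpr hD)]

lemma mem_pair_of_cross_eq_zero {x z D : Plane} {δ : ℝ} (hD : D ≠ 0)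
    (hz : z ∈ Metric.sphere x δ) (h : cross D (z - x) = 0) :
    z ∈ ({x - (δ / ‖D‖) • D, x + (δ / ‖D‖) • D} : Set Plane) := by
  obtain ⟨μ, hμ⟩ := exists_eq_smul_of_cross_eq_zero hD h
  have hμδ : |μ| = δ / ‖D‖ := by
    rw [eq_div_iff (norm_ne_zero_iff.mpr hD), ← Real.norm_eq_abs, ← norm_smul, ← hμ,
      ← dist_eq_norm]
    exact hz
  rw [eq_add_of_sub_eq' hμ]
  rcases abs_eq (hμδ ▸ abs_nonneg μ) |>.mp hμδ with h | h
  · exact Or.inr (by rw [h]; rfl)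
  · exact Or.inl (by rw [h, neg_smul, ← sub_eq_add_neg])

lemma connectedComponentIn_ne_of_sign {X : Type*} [TopologicalSpace X] {S : Set X}
    {φ : X → ℝ} (hφ : ContinuousOn φ S) (hS : ∀ z ∈ S, φ z ≠ 0) {c d : X} (hc : c ∈ S)
    (hd : d ∈ S) (hφc : φ c < 0) (hφd : 0 < φ d) :
    connectedComponentIn S c ≠ connectedComponentIn S d := by
  intro heq
  have hdc : d ∈ connectedComponentIn S c := heq ▸ mem_connectedComponentIn hd
  obtain ⟨z, hz, hz0⟩ := isPreconnected_connectedComponentIn.intermediate_value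
    (mem_connectedComponentIn hc) hdc (hφ.mono (connectedComponentIn_subset S c))
    ⟨hφc.le, hφd.le⟩
  exact hS z (connectedComponentIn_subset S c hz) hz0

/-- Two non-parallel chords through the centre of a circle separate each other's endpoints. -/
lemma alternates_of_not_parallel {x Dx Dy : Plane} {δ : ℝ} (hδ : 0 < δ) (hDx : Dx ≠ 0)
    (hpar : ∀ μ : ℝ, Dy ≠ μ • Dx) :
    Alternates x δ (x - (δ / ‖Dx‖) • Dx) (x + (δ / ‖Dx‖) • Dx)
      (x - (δ / ‖Dy‖) • Dy) (x + (δ / ‖Dy‖) • Dy) := by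
  have hDy : Dy ≠ 0 := by simpa using hpar 0
  have hcr : cross Dx Dy ≠ 0 := fun h =>
    let ⟨μ, hμ⟩ := exists_eq_smul_of_cross_eq_zero hDx h
    hpar μ hμ
  -- the factor `cross Dx Dy` makes `φ` negative at the first endpoint of the `Dy`-chord
  set φ : Plane → ℝ := fun z => cross Dx Dy * cross Dx (z - x)
  have hφ : Continuous φ := by
    simp only [φ, cross]
    fun_prop
  have hφx : ∀ (c : ℝ) (D : Plane), φ (x + c • D) = c * (cross Dx Dy * cross Dx D) := by
    intro c D
    simp only [φ, cross, add_sub_cancel_left, PiLp.smul_apply, smul_eq_mul]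
    ring
  have hcpos : 0 < δ / ‖Dy‖ := by positivity
  have hneg : ∀ D : Plane, x - (δ / ‖D‖) • D = x + (-(δ / ‖D‖)) • D := fun D => by
    rw [neg_smul, sub_eq_add_neg]
  have hc : x - (δ / ‖Dy‖) • Dy ∈ Metric.sphere x δ := by
    rw [hneg]
    exact add_smul_mem_sphere x hDy (by rw [abs_neg, abs_of_pos hcpos])
  have hd : x + (δ / ‖Dy‖) • Dy ∈ Metric.sphere x δ :=
    add_smul_mem_sphere x hDy (abs_of_pos hcpos)
  have hφc : φ (x - (δ / ‖Dy‖) • Dy) < 0 := by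
    rw [hneg, hφx, neg_mul, neg_neg_iff_pos]
    exact mul_pos hcpos (mul_self_pos.mpr hcr)
  have hφd : 0 < φ (x + (δ / ‖Dy‖) • Dy) := by
    rw [hφx]
    exact mul_pos hcpos (mul_self_pos.mpr hcr)
  have hφab : ∀ z ∈ ({x - (δ / ‖Dx‖) • Dx, x + (δ / ‖Dx‖) • Dx} : Set Plane), φ z = 0 := by
    have hself : cross Dx Dx = 0 := by
      simp only [cross]
      ring
    rintro z (rfl | rfl)
    · rw [hneg, hφx, hself, mul_zero, mul_zero]
    · rw [hφx, hself, mul_zero, mul_zero]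
  have hS : ∀ z ∈ Metric.sphere x δ \ {x - (δ / ‖Dx‖) • Dx, x + (δ / ‖Dx‖) • Dx}, φ z ≠ 0 :=
    fun z ⟨hz, hzab⟩ hφz =>
      hzab (mem_pair_of_cross_eq_zero hDx hz ((mul_eq_zero.mp hφz).resolve_left hcr))
  have hcS : x - (δ / ‖Dy‖) • Dy ∈ Metric.sphere x δ \ _ := ⟨hc, fun h => hφc.ne (hφab _ h)⟩
  have hdS : x + (δ / ‖Dy‖) • Dy ∈ Metric.sphere x δ \ _ := ⟨hd, fun h => hφd.ne' (hφab _ h)⟩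
  exact ⟨hcS, hdS, connectedComponentIn_ne_of_sign hφ.continuousOn hS hcS hdS hφc hφd⟩

lemma entryParam_exitParam_eq {p : Track} {s δ r : ℝ} (hδ : 0 < δ) (hr : 0 < r)
    (h : ∀ u ∈ Set.Icc (s - r) (s + r), ‖p.path u - p.path s‖ = |u - s| / r * δ) :
    entryParam p s δ (p.path s) = s - r ∧ exitParam p s δ (p.path s) = s + r := by
  have hball : ∀ u ∈ Set.Icc (s - r) (s + r),
      p.path u ∈ Metric.ball (p.path s) δ ↔ |u - s| < r := fun u hu => by
    rw [Metric.mem_ball, dist_eq_norm, h u hu, mul_lt_iff_lt_one_left hδ, div_lt_one hr]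
  have hentry : {s' | s' < s ∧ p.path '' Set.Icc s' s ⊆ Metric.ball (p.path s) δ} =
      Set.Ioo (s - r) s := by
    ext s'
    refine ⟨fun ⟨h1, h2⟩ => ⟨lt_of_not_ge fun hs' => ?_, h1⟩, fun ⟨h1, h2⟩ => ⟨h2, ?_⟩⟩
    · have hmem := (hball (s - r) ⟨le_rfl, by linarith⟩).mp
        (h2 ⟨s - r, ⟨hs', by linarith⟩, rfl⟩)
      rw [sub_sub_cancel_left, abs_neg, abs_of_pos hr] at hmem
      exact lt_irrefl r hmem
    · rintro _ ⟨u, hu, rfl⟩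
      exact (hball u ⟨by linarith [hu.1], by linarith [hu.2]⟩).mpr
        (abs_sub_lt_iff.mpr ⟨by linarith [hu.2], by linarith [hu.1]⟩)
  have hexit : {s' | s < s' ∧ p.path '' Set.Icc s s' ⊆ Metric.ball (p.path s) δ} =
      Set.Ioo s (s + r) := by
    ext s'
    refine ⟨fun ⟨h1, h2⟩ => ⟨h1, lt_of_not_ge fun hs' => ?_⟩, fun ⟨h1, h2⟩ => ⟨h1, ?_⟩⟩
    · have hmem := (hball (s + r) ⟨by linarith, le_rfl⟩).mp
        (h2 ⟨s + r, ⟨by linarith, hs'⟩, rfl⟩)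
      rw [add_sub_cancel_left, abs_of_pos hr] at hmem
      exact lt_irrefl r hmem
    · rintro _ ⟨u, hu, rfl⟩
      exact (hball u ⟨by linarith [hu.1], by linarith [hu.2]⟩).mpr
        (abs_sub_lt_iff.mpr ⟨by linarith [hu.2], by linarith [hu.1]⟩)
  rw [entryParam, exitParam, hentry, hexit]
  exact ⟨csInf_Ioo (by linarith), csSup_Ioo (by linarith)⟩

lemma Track.path_entryParam_exitParam (p : Track) {s δ : ℝ} (hs0 : p.s 0 ≤ s)
    (hsk : s < p.s p.k) (hδ : 0 < δ) (hlo : δ < ‖p.path s - p.x (p.seg s)‖)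
    (hhi : δ < ‖p.path s - p.x (p.seg s + 1)‖) :
    p.path (entryParam p s δ (p.path s)) = p.path s - (δ / ‖p.dir s‖) • p.dir s ∧
      p.path (exitParam p s δ (p.path s)) = p.path s + (δ / ‖p.dir s‖) • p.dir s := by
  obtain ⟨hi, hi1, hi2⟩ := p.seg_spec hs0 hsk
  set a := p.s (p.seg s)
  set b := p.s (p.seg s + 1)
  have hab : 0 < b - a := sub_pos.mpr (p.mono _ hi)
  have hD : 0 < ‖p.dir s‖ := norm_pos_iff.mpr (p.dir_ne_zero hs0 hsk)
  set r := δ * (b - a) / ‖p.dir s‖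
  have hr : 0 < r := by positivity
  have hrD : r * ‖p.dir s‖ = δ * (b - a) := div_mul_cancel₀ _ hD.ne'
  have hlo' : r < s - a := by
    rw [p.path_sub_x_seg, norm_smul, Real.norm_eq_abs, abs_of_nonneg (by
      exact div_nonneg (by linarith) hab.le), div_mul_eq_mul_div, lt_div_iff₀ hab] at hlo
    exact (div_lt_iff₀ hD).mpr (by linarith)
  have hhi' : r < b - s := by
    rw [p.path_sub_x_seg_succ hs0 hsk, norm_smul, Real.norm_eq_abs, abs_div, abs_of_pos hab,
      abs_sub_comm, abs_of_pos (by linarith), div_mul_eq_mul_div, lt_div_iff₀ hab] at hhi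
    exact (div_lt_iff₀ hD).mpr (by linarith)
  have hstep : ∀ u ∈ Set.Icc (s - r) (s + r),
      p.path u = p.path s + ((u - s) / (b - a)) • p.dir s := fun u hu =>
    eq_add_of_sub_eq' (p.path_sub_path hs0 hsk (by linarith [hu.1]) (by linarith [hu.2]))
  obtain ⟨he, hx⟩ := entryParam_exitParam_eq hδ hr fun u hu => by
    rw [hstep u hu, add_sub_cancel_left, norm_smul, Real.norm_eq_abs, abs_div, abs_of_pos hab]
    field_simp
    linear_combination |u - s| * hrD
  have hcoef : r / (b - a) = δ / ‖p.dir s‖ := by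
    field_simp
    linear_combination hrD
  rw [he, hx, hstep _ ⟨le_rfl, by linarith⟩, hstep _ ⟨by linarith, le_rfl⟩, sub_sub_cancel_left,
    add_sub_cancel_left, neg_div, hcoef, neg_smul, ← sub_eq_add_neg]
  exact ⟨rfl, rfl⟩

namespace WSep

variable {p q : Track}

lemma path_notMem_V (hsep : WSep p q) {s t : ℝ} (h : IsInter p q s t) : p.path s ∉ p.V ∪ q.V := by
  obtain ⟨hs0, hsk, ht0, htk, hpq⟩ := h
  rintro (hv | hv)
  · exact (Set.eq_empty_iff_forall_notMem.mp hsep.1) _ ⟨hv, hpq ▸ q.path_mem_L ht0.le htk⟩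
  · exact (Set.eq_empty_iff_forall_notMem.mp hsep.2) _ ⟨hv, p.path_mem_L hs0.le hsk⟩

lemma dir_ne_smul_dir (hsep : WSep p q) {s t : ℝ} (h : IsInter p q s t) (μ : ℝ) : q.dir t ≠ μ • p.dir s := by
  obtain ⟨hs0, hsk, ht0, htk, hpq⟩ := h
  intro hμ
  have hμ0 : μ ≠ 0 := by
    rintro rfl
    exact q.dir_ne_zero ht0.le htk (by simpa using hμ)
  refine (Set.eq_empty_iff_forall_notMem.mp hsep.1) (p.x (p.seg s))
    ⟨⟨p.seg s, (p.seg_spec hs0.le hsk).1.le, rfl⟩, q.seg t, (q.seg_spec ht0.le htk).1, ?_⟩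
  exact mem_line_of_parallel hμ0 hμ (p.path_mem_line s) (hpq ▸ q.path_mem_line t)

lemma isCrossing_iff (hsep : WSep p q) {s t : ℝ} : IsCrossing p q s t ↔ IsInter p q s t := by
  refine ⟨And.left, fun h => ⟨h, ?_⟩⟩
  have ⟨hs0, hsk, ht0, htk, hpq⟩ := h
  obtain ⟨ε, hε, hV⟩ := exists_pos_forall_le_dist (p.finite_V.union q.finite_V).isClosed
    (hsep.path_notMem_V h)
  have hδ : ∀ v ∈ p.V ∪ q.V, ε / 2 < ‖p.path s - v‖ := fun v hv => by
    rw [← dist_eq_norm]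
    linarith [hV v hv]
  obtain ⟨hi, -, -⟩ := p.seg_spec hs0.le hsk
  obtain ⟨hj, -, -⟩ := q.seg_spec ht0.le htk
  obtain ⟨hpe, hpx⟩ := p.path_entryParam_exitParam hs0.le hsk (half_pos hε)
    (hδ _ (Or.inl ⟨_, hi.le, rfl⟩)) (hδ _ (Or.inl ⟨_, hi, rfl⟩))
  obtain ⟨hqe, hqx⟩ := q.path_entryParam_exitParam ht0.le htk (half_pos hε)
    (hpq ▸ hδ _ (Or.inr ⟨_, hj.le, rfl⟩)) (hpq ▸ hδ _ (Or.inr ⟨_, hj, rfl⟩))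
  refine ⟨ε / 2, ⟨half_pos hε, fun v hv hball => ?_⟩, ?_⟩
  · rw [Metric.mem_ball, dist_eq_norm, norm_sub_rev] at hball
    exact absurd hball (hδ v hv).not_gt
  · rw [CrossAt, hpe, hpx, hpq, hqe, hqx]
    exact alternates_of_not_parallel (half_pos hε) (p.dir_ne_zero hs0.le hsk)
      (hsep.dir_ne_smul_dir h)

/-- Two intersections on the same pair of segments coincide: otherwise both segments would lie on
one line, which would then contain a vertex of `p`. -/
lemma finite_setOf_isInter (hsep : WSep p q) : {st : ℝ × ℝ | IsInter p q st.1 st.2}.Finite := by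
  have hinj : Set.InjOn (fun st : ℝ × ℝ => (p.seg st.1, q.seg st.2))
      {st | IsInter p q st.1 st.2} := by
    rintro ⟨s, t⟩ hst ⟨s', t'⟩ hst' heq
    obtain ⟨hs0, hsk, ht0, htk, hpq⟩ : IsInter p q s t := hst
    obtain ⟨hs0', hsk', ht0', htk', hpq'⟩ : IsInter p q s' t' := hst'
    obtain ⟨hi, hj⟩ : p.seg s = p.seg s' ∧ q.seg t = q.seg t' := Prod.mk.inj heq
    have hx : p.path s = p.path s' := by
      by_contra hne
      refine (Set.eq_empty_iff_forall_notMem.mp hsep.1) (p.x (p.seg s))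
        ⟨⟨p.seg s, (p.seg_spec hs0.le hsk).1.le, rfl⟩, q.seg t, (q.seg_spec ht0.le htk).1, ?_⟩
      refine mem_line_of_two_mem hne (p.path_mem_line s) (hi ▸ p.path_mem_line s')
        (hpq ▸ q.path_mem_line t) ?_
      rw [hpq', hj]
      exact q.path_mem_line t'
    have ht : q.path t = q.path t' := by rw [← hpq, ← hpq', hx]
    exact Prod.ext (p.eq_of_path_eq hs0.le hsk hs0'.le hsk' hi hx)
      (q.eq_of_path_eq ht0.le htk ht0'.le htk' hj ht)
  refine Set.Finite.of_finite_image (((Set.finite_Iic p.k).prod (Set.finite_Iic q.k)).subset ?_)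
    hinj
  rintro _ ⟨⟨s, t⟩, ⟨hs0, hsk, ht0, htk, -⟩, rfl⟩
  exact ⟨(p.seg_spec hs0.le hsk).1.le, (q.seg_spec ht0.le htk).1.le⟩

lemma CN_eq_ncard (hsep : WSep p q) : CN p q = {st : ℝ × ℝ | IsInter p q st.1 st.2}.ncard := by
  simp only [CN, hsep.isCrossing_iff]

end WSep

namespace Track

variable (p : Track)

def take {m : ℕ} (hm : m ≤ p.k) : Track where
  k := m
  s := p.s
  x := p.x
  mono i hi := p.mono i (hi.trans_le hm)
  ne i hi := p.ne i (hi.trans_le hm)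

def drop (m : ℕ) : Track where
  k := p.k - m
  s i := p.s (m + i)
  x i := p.x (m + i)
  mono i hi := p.mono (m + i) (by omega)
  ne i hi := p.ne (m + i) (by omega)

lemma path_take {m : ℕ} (hm : m ≤ p.k) {t : ℝ} (h0 : p.s 0 ≤ t) (hm' : t < p.s m) :
    (p.take hm).path t = p.path t := by
  obtain ⟨hi, h1, h2⟩ := (p.take hm).seg_spec h0 hm'
  rw [Track.path, Track.path, p.seg_eq (hi.trans_le hm) h1 h2]
  rfl

lemma path_drop {m : ℕ} (hm : m ≤ p.k) {t : ℝ} (h0 : p.s m ≤ t) (hk : t < p.s p.k) :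
    (p.drop m).path t = p.path t := by
  have hk' : t < (p.drop m).s (p.drop m).k := by
    simpa [drop, Nat.add_sub_cancel' hm] using hk
  obtain ⟨hj, h1, h2⟩ := (p.drop m).seg_spec h0 hk'
  rw [Track.path, Track.path, p.seg_eq (i := m + (p.drop m).seg t)
    (by have : (p.drop m).seg t < p.k - m := hj; omega) h1 h2]
  rfl

lemma V_take_subset {m : ℕ} (hm : m ≤ p.k) : (p.take hm).V ⊆ p.V :=
  fun _ ⟨i, hi, hz⟩ => ⟨i, hi.trans hm, hz⟩

lemma L_take_subset {m : ℕ} (hm : m ≤ p.k) : (p.take hm).L ⊆ p.L :=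
  fun _ ⟨i, hi, hz⟩ => ⟨i, hi.trans_le hm, hz⟩

lemma V_drop_subset {m : ℕ} (hm : m ≤ p.k) : (p.drop m).V ⊆ p.V :=
  fun _ ⟨i, hi, hz⟩ => ⟨m + i, by have : i ≤ p.k - m := hi; omega, hz⟩

lemma L_drop_subset (m : ℕ) : (p.drop m).L ⊆ p.L :=
  fun _ ⟨i, hi, hz⟩ => ⟨m + i, by have : i < p.k - m := hi; omega, hz⟩

end Track

namespace WSep

variable {p q : Track}

lemma of_subset {p' : Track} (hsep : WSep p q) (hV : p'.V ⊆ p.V) (hL : p'.L ⊆ p.L) :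
    WSep p' q :=
  ⟨Set.subset_eq_empty (Set.inter_subset_inter_left _ hV) hsep.1,
    Set.subset_eq_empty (Set.inter_subset_inter_right _ hL) hsep.2⟩

lemma take (hsep : WSep p q) {m : ℕ} (hm : m ≤ p.k) : WSep (p.take hm) q :=
  hsep.of_subset (p.V_take_subset hm) (p.L_take_subset hm)

lemma drop (hsep : WSep p q) {m : ℕ} (hm : m ≤ p.k) : WSep (p.drop m) q :=
  hsep.of_subset (p.V_drop_subset hm) (p.L_drop_subset m)

/-- The parameter `p.s m` where `p` is cut carries a vertex, so it is not an intersection. -/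
lemma setOf_isInter_eq_union (hsep : WSep p q) {m : ℕ} (hm : m ≤ p.k) :
    {st : ℝ × ℝ | IsInter p q st.1 st.2} =
      {st | IsInter (p.take hm) q st.1 st.2} ∪ {st | IsInter (p.drop m) q st.1 st.2} := by
  have hs0m : p.s 0 ≤ p.s m := p.s_le_s (Nat.zero_le m) hm
  have hsmk : p.s m ≤ p.s p.k := p.s_le_s hm le_rfl
  have hdk : (p.drop m).s (p.drop m).k = p.s p.k := by simp [Track.drop, Nat.add_sub_cancel' hm]
  ext ⟨s, t⟩
  simp only [Set.mem_union]
  constructor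
  · intro h
    obtain ⟨hs0, hsk, ht0, htk, hpq⟩ := id h
    rcases lt_trichotomy s (p.s m) with hlt | rfl | hgt
    · exact Or.inl ⟨hs0, hlt, ht0, htk, (p.path_take hm hs0.le hlt).trans hpq⟩
    · have hmk : m < p.k := hm.lt_of_ne (by rintro rfl; exact lt_irrefl _ hsk)
      exact absurd (Or.inl ⟨m, hm, p.path_s hmk⟩) (hsep.path_notMem_V h)
    · exact Or.inr ⟨hgt, hdk ▸ hsk, ht0, htk, (p.path_drop hm hgt.le hsk).trans hpq⟩
  · rintro (⟨hs0, hsm, ht0, htk, hpq⟩ | ⟨hsm, hsk, ht0, htk, hpq⟩)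
    · exact ⟨hs0, hsm.trans_le hsmk, ht0, htk, (p.path_take hm hs0.le hsm).symm.trans hpq⟩
    · have hsk' : s < p.s p.k := hdk ▸ hsk
      exact ⟨hs0m.trans_lt hsm, hsk', ht0, htk, (p.path_drop hm hsm.le hsk').symm.trans hpq⟩

lemma CN_eq_CN_take_add_CN_drop (hsep : WSep p q) {m : ℕ} (hm : m ≤ p.k) :
    CN p q = CN (p.take hm) q + CN (p.drop m) q := by
  have h₁ := hsep.take hm
  have h₂ := hsep.drop hm
  rw [hsep.CN_eq_ncard, h₁.CN_eq_ncard, h₂.CN_eq_ncard, hsep.setOf_isInter_eq_union hm]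
  refine Set.ncard_union_eq ?_ h₁.finite_setOf_isInter h₂.finite_setOf_isInter
  rw [Set.disjoint_left]
  rintro ⟨s, t⟩ h h'
  exact lt_asymm h.2.1 h'.1

lemma par_eq_par_take_add_par_drop (hsep : WSep p q) {m : ℕ} (hm : m ≤ p.k) :
    par p q = (par (p.take hm) q + par (p.drop m) q) % 2 := by
  rw [par, par, par, hsep.CN_eq_CN_take_add_CN_drop hm, Nat.add_mod]

end WSep

lemma IsApprox.take {f : ℝ → Plane} {md : ℕ → ℕ} {a b : ℝ} {n : ℕ} {p : Track}
    (h : IsApprox f md a b n p) {m : ℕ} (hm : m ≤ p.k) : IsApprox f md a (p.s m) n (p.take hm) :=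
  ⟨h.1, rfl, fun i hi => h.2.2.1 i (hi.trans_le hm), fun i hi => h.2.2.2 i (hi.trans hm)⟩

lemma IsApprox.drop {f : ℝ → Plane} {md : ℕ → ℕ} {a b : ℝ} {n : ℕ} {p : Track}
    (h : IsApprox f md a b n p) {m : ℕ} (hm : m ≤ p.k) : IsApprox f md (p.s m) b n (p.drop m) :=
  ⟨rfl, by simpa [Track.drop, Nat.add_sub_cancel' hm] using h.2.1,
    fun i hi => h.2.2.1 (m + i) (by have : i < p.k - m := hi; omega),
    fun i hi => h.2.2.2 (m + i) (by have : i ≤ p.k - m := hi; omega)⟩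

def IsFinePartition (τ : ℕ → ℝ) (k : ℕ) (a b h : ℝ) : Prop :=
  τ 0 = a ∧ τ k = b ∧ ∀ i < k, τ i < τ (i + 1) ∧ τ (i + 1) - τ i < h

lemma exists_isFinePartition {a b h : ℝ} (hab : a ≤ b) (hh : 0 < h) :
    ∃ k τ, IsFinePartition τ k a b h := by
  rcases hab.eq_or_lt with rfl | hab
  · exact ⟨0, fun _ => a, rfl, rfl, fun i hi => absurd hi (Nat.not_lt_zero i)⟩
  obtain ⟨k, hk⟩ := exists_nat_gt ((b - a) / h)
  have hk0 : (0 : ℝ) < k := (div_pos (sub_pos.mpr hab) hh).trans hk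
  have hstep : 0 < (b - a) / k := div_pos (sub_pos.mpr hab) hk0
  refine ⟨k, fun i => a + i * ((b - a) / k), by simp, by field_simp; ring, fun i _ => ⟨?_, ?_⟩⟩
  · push_cast
    linarith
  · push_cast
    rw [add_sub_add_left_eq_sub, ← sub_mul, add_sub_cancel_left, one_mul, div_lt_iff₀ hk0]
    linarith [(div_lt_iff₀ hh).mp hk]

lemma IsFinePartition.append {τ₁ τ₂ : ℕ → ℝ} {k₁ k₂ : ℕ} {a b c h : ℝ}
    (h₁ : IsFinePartition τ₁ k₁ a c h) (h₂ : IsFinePartition τ₂ k₂ c b h) :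
    IsFinePartition (fun i => if i ≤ k₁ then τ₁ i else τ₂ (i - k₁)) (k₁ + k₂) a b h := by
  obtain ⟨h₁0, h₁k, h₁step⟩ := h₁
  obtain ⟨h₂0, h₂k, h₂step⟩ := h₂
  have hright : ∀ i, k₁ ≤ i → (if i ≤ k₁ then τ₁ i else τ₂ (i - k₁)) = τ₂ (i - k₁) := by
    intro i hi
    split_ifs with hi'
    · rw [le_antisymm hi' hi, h₁k, Nat.sub_self, h₂0]
    · rfl
  refine ⟨by simpa using h₁0, ?_, fun i hi => ?_⟩
  · dsimp only
    rw [hright _ (Nat.le_add_right _ _), Nat.add_sub_cancel_left, h₂k]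
  dsimp only
  rcases lt_or_ge i k₁ with hi₁ | hi₁
  · simp only [if_pos hi₁.le, if_pos (Nat.succ_le_of_lt hi₁)]
    exact h₁step i hi₁
  · rw [hright i hi₁, hright (i + 1) (by omega), show i + 1 - k₁ = i - k₁ + 1 by omega]
    exact h₂step _ (by omega)

lemma exists_isFinePartition_through {a b c h : ℝ} (hac : a ≤ c) (hcb : c ≤ b) (hh : 0 < h) :
    ∃ k N τ, N ≤ k ∧ τ N = c ∧ IsFinePartition τ k a b h := by
  obtain ⟨k₁, τ₁, h₁⟩ := exists_isFinePartition hac hh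
  obtain ⟨k₂, τ₂, h₂⟩ := exists_isFinePartition hcb hh
  exact ⟨k₁ + k₂, k₁, _, Nat.le_add_right _ _, by simpa using h₁.2.1, h₁.append h₂⟩

def InGeneralPosition (v : ℕ → Plane) (M : ℕ) : Prop :=
  Set.InjOn v (Set.Iic M) ∧
    ∀ a ≤ M, ∀ b ≤ M, ∀ c ≤ M, a ≠ b → a ≠ c → b ≠ c → ¬ Collinear ℝ {v a, v b, v c}

lemma line_ne_top (a b : Plane) : affineSpan ℝ ({a, b} : Set Plane) ≠ ⊤ := by
  intro h
  have hrank := finrank_span_le_card (R := ℝ) ({a -ᵥ b} : Set Plane)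
  rw [← vectorSpan_pair, ← direction_affineSpan, h, AffineSubspace.direction_top, finrank_top,
    finrank_euclideanSpace_fin] at hrank
  simp at hrank

/-- Lines are Lebesgue-null, so a ball meets the complement of finitely many of them. -/
lemma exists_near_notMem_lines (v : ℕ → Plane) (M : ℕ) (z₀ : Plane) {ε : ℝ} (hε : 0 < ε) :
    ∃ z, ‖z - z₀‖ < ε ∧ ∀ i ≤ M, ∀ j ≤ M, z ∉ line (v i) (v j) := by
  set bad := ⋃ i ∈ Set.Iic M, ⋃ j ∈ Set.Iic M, line (v i) (v j)
  have hbad : MeasureTheory.volume bad = 0 := by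
    refine (MeasureTheory.measure_biUnion_null_iff (Set.to_countable _)).mpr fun i _ =>
      (MeasureTheory.measure_biUnion_null_iff (Set.to_countable _)).mpr fun j _ => ?_
    exact MeasureTheory.Measure.addHaar_affineSubspace _ _ (line_ne_top (v i) (v j))
  obtain ⟨z, hz, hzbad⟩ : (Metric.ball z₀ ε \ bad).Nonempty :=
    MeasureTheory.nonempty_of_measure_ne_zero
      (by rw [MeasureTheory.measure_sdiff_null hbad]; exact (Metric.measure_ball_pos _ z₀ hε).ne')
  refine ⟨z, by rwa [← dist_eq_norm], fun i hi j hj hmem => hzbad ?_⟩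
  exact Set.mem_biUnion (Set.mem_Iic.mpr hi) (Set.mem_biUnion (Set.mem_Iic.mpr hj) hmem)

lemma InGeneralPosition.extend {v : ℕ → Plane} {M : ℕ} (hv : InGeneralPosition v M) {z : Plane}
    (hz : ∀ i ≤ M, ∀ j ≤ M, z ∉ line (v i) (v j)) :
    InGeneralPosition (fun m => if m ≤ M then v m else z) (M + 1) := by
  obtain ⟨hinj, hcol⟩ := hv
  have hzv : ∀ i ≤ M, z ≠ v i := fun i hi h => hz i hi i hi (h ▸ left_mem_affineSpan_pair ℝ _ _)
  have hzcol : ∀ i ≤ M, ∀ j ≤ M, i ≠ j → ¬ Collinear ℝ {z, v i, v j} := fun i hi j hj hij h =>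
    hz i hi j hj (h.mem_affineSpan_of_mem_of_ne (by simp) (by simp) (by simp)
      (hinj.ne (Set.mem_Iic.mpr hi) (Set.mem_Iic.mpr hj) hij))
  have hold : ∀ m ≤ M, (if m ≤ M then v m else z) = v m := fun m hm => if_pos hm
  have hnew : (if M + 1 ≤ M then v (M + 1) else z) = z := if_neg (by omega)
  refine ⟨fun a ha b hb hab => ?_, fun a ha b hb c hc hab hac hbc => ?_⟩
  · rw [Set.mem_Iic, Nat.le_succ_iff] at ha hb
    dsimp only at hab
    rcases ha with ha | rfl <;> rcases hb with hb | rfl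
    · rw [hold a ha, hold b hb] at hab
      exact hinj ha hb hab
    · exact absurd (hnew ▸ hold a ha ▸ hab).symm (hzv a ha)
    · exact absurd (hnew ▸ hold b hb ▸ hab) (hzv b hb)
    · rfl
  · rw [Nat.le_succ_iff] at ha hb hc
    dsimp only
    rcases ha with ha | rfl <;> rcases hb with hb | rfl <;> rcases hc with hc | rfl <;>
      try omega
    · rw [hold a ha, hold b hb, hold c hc]
      exact hcol a ha b hb c hc hab hac hbc
    · rw [hold a ha, hold b hb, hnew, Set.pair_comm (v b) z, Set.insert_comm]
      exact hzcol a ha b hb hab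
    · rw [hold a ha, hnew, hold c hc, Set.insert_comm]
      exact hzcol a ha c hc hac
    · rw [hnew, hold b hb, hold c hc]
      exact hzcol b hb c hc hbc

lemma exists_inGeneralPosition (T : ℕ → Plane) {ε : ℝ} (hε : 0 < ε) (M : ℕ) :
    ∃ v : ℕ → Plane, (∀ m ≤ M, ‖v m - T m‖ < ε) ∧ InGeneralPosition v M := by
  induction M with
  | zero =>
    refine ⟨T, fun m _ => by simpa using hε, fun a ha b hb _ => ?_, ?_⟩
    · rw [Set.mem_Iic, Nat.le_zero] at ha hb
      rw [ha, hb]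
    · intro a ha b hb _ _ hab _ _
      omega
  | succ M ih =>
    obtain ⟨v, hvT, hv⟩ := ih
    obtain ⟨z, hzT, hz⟩ := exists_near_notMem_lines v M (T (M + 1)) hε
    refine ⟨_, fun m hm => ?_, hv.extend hz⟩
    rcases Nat.le_succ_iff.mp hm with hm | rfl
    · simpa [hm] using hvT m hm
    · simpa using hzT

lemma wsep_of_inGeneralPosition {p q : Track} {v : ℕ → Plane} {K M : ℕ}
    (hv : InGeneralPosition v M) (hqK : q.k < K) (hpM : K + p.k ≤ M)
    (hpx : ∀ i ≤ p.k, p.x i = v (K + i)) (hqx : ∀ j ≤ q.k, q.x j = v j) : WSep p q := by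
  refine ⟨Set.eq_empty_iff_forall_notMem.mpr ?_, Set.eq_empty_iff_forall_notMem.mpr ?_⟩
  · rintro _ ⟨⟨i, hi, rfl⟩, j, hj, hmem⟩
    rw [hpx i hi, hqx j hj.le, hqx (j + 1) hj] at hmem
    exact hv.2 _ (by omega) _ (by omega) _ (by omega) (by omega) (by omega) (by omega)
      (collinear_insert_of_mem_affineSpan_pair hmem)
  · rintro _ ⟨⟨j, hj, rfl⟩, i, hi, hmem⟩
    rw [hqx j hj, hpx i hi.le, hpx (i + 1) hi] at hmem
    exact hv.2 _ (by omega) _ (by omega) _ (by omega) (by omega) (by omega) (by omega)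
      (collinear_insert_of_mem_affineSpan_pair hmem)

/-- Take fine partitions and perturb the vertices into general position. -/
lemma exists_wsep_approx (f g : ℝ → Plane) (md : ℕ → ℕ) (n : ℕ) {aI bI aJ bJ c : ℝ}
    (hc₁ : aI ≤ c) (hc₂ : c ≤ bI) (hJab : aJ ≤ bJ) :
    ∃ (p q : Track) (N : ℕ), N ≤ p.k ∧ p.s N = c ∧ IsApprox f md aI bI n p ∧
      IsApprox g md aJ bJ n q ∧ WSep p q := by
  obtain ⟨k, N, τ, hN, hτN, hτ0, hτk, hτ⟩ :=
    exists_isFinePartition_through hc₁ hc₂ (by positivity : (0 : ℝ) < 2 ^ (-(md n : ℤ)))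
  obtain ⟨M, σ, hσ0, hσM, hσ⟩ :=
    exists_isFinePartition hJab (by positivity : (0 : ℝ) < 2 ^ (-(md n : ℤ)))
  obtain ⟨v, hvT, hv⟩ := exists_inGeneralPosition
    (fun m => if m ≤ M then g (σ m) else f (τ (m - (M + 1))))
    (by positivity : (0 : ℝ) < 2 ^ (-(n : ℤ))) (M + 1 + k)
  let p : Track := ⟨k, τ, fun i => v (M + 1 + i), fun i hi => (hτ i hi).1,
    fun i hi => hv.1.ne (Set.mem_Iic.mpr (by omega)) (Set.mem_Iic.mpr (by omega)) (by omega)⟩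
  let q : Track := ⟨M, σ, v, fun j hj => (hσ j hj).1,
    fun j hj => hv.1.ne (Set.mem_Iic.mpr (by omega)) (Set.mem_Iic.mpr (by omega)) (by omega)⟩
  refine ⟨p, q, N, hN, hτN, ⟨hτ0, hτk, fun i hi => (hτ i hi).2, fun i hi => ?_⟩,
    ⟨hσ0, hσM, fun j hj => (hσ j hj).2, fun j hj => ?_⟩,
    wsep_of_inGeneralPosition hv (Nat.lt_succ_self M) le_rfl (fun _ _ => rfl) (fun _ _ => rfl)⟩
  · have h := hvT (M + 1 + i) (by change i ≤ k at hi; omega)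
    rwa [if_neg (by omega), Nat.add_sub_cancel_left, norm_sub_rev] at h
  · have h := hvT j (by change j ≤ M at hj; omega)
    rwa [if_pos hj, norm_sub_rev] at h

lemma ds_le {A B : Set Plane} {a b : Plane} (ha : a ∈ A) (hb : b ∈ B) : ds A B ≤ ‖a - b‖ :=
  csInf_le ⟨0, by rintro r ⟨a', -, b', -, rfl⟩; positivity⟩ ⟨a, ha, b, hb, rfl⟩

lemma le_ds {A B : Set Plane} (hA : A.Nonempty) (hB : B.Nonempty) {m : ℝ}
    (h : ∀ a ∈ A, ∀ b ∈ B, m ≤ ‖a - b‖) : m ≤ ds A B := by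
  obtain ⟨a, ha⟩ := hA
  obtain ⟨b, hb⟩ := hB
  exact le_csInf ⟨_, a, ha, b, hb, rfl⟩ fun r ⟨a, ha, b, hb, hr⟩ => hr ▸ h a ha b hb

lemma alphaIJ_le_norm_sub {f g : ℝ → Plane} {aI bI aJ bJ : ℝ} {z y : Plane}
    (hz : z ∈ ({f aI, f bI} : Set Plane)) (hy : y ∈ g '' Set.Icc aJ bJ) :
    alphaIJ f g aI bI aJ bJ ≤ ‖z - y‖ :=
  (min_le_left _ _).trans (ds_le hz hy)

lemma alphaIJ_pos_of_subinterval {f g : ℝ → Plane} {aI bI aJ bJ u w : ℝ} (hJab : aJ ≤ bJ)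
    (hu : aI ≤ u) (huw : u ≤ w) (hw : w ≤ bI) (hα : 0 < alphaIJ f g aI bI aJ bJ)
    (hfar : ∀ z ∈ ({f u, f w} : Set Plane), ∃ β > 0, ∀ y ∈ g '' Set.Icc aJ bJ, β ≤ ‖z - y‖) :
    0 < alphaIJ f g u w aJ bJ := by
  have hJ : (g '' Set.Icc aJ bJ).Nonempty := (Set.nonempty_Icc.mpr hJab).image g
  obtain ⟨βu, hβu, hu'⟩ := hfar (f u) (by simp)
  obtain ⟨βw, hβw, hw'⟩ := hfar (f w) (by simp)
  refine lt_min ((lt_min hβu hβw).trans_le (le_ds (by simp) hJ ?_)) (hα.trans_le ?_)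
  · rintro _ (rfl | rfl) y hy
    · exact (min_le_left _ _).trans (hu' y hy)
    · exact (min_le_right _ _).trans (hw' y hy)
  · refine (min_le_right _ _).trans (le_ds (by simp) ((Set.nonempty_Icc.mpr huw).image f) ?_)
    rintro z hz _ ⟨t, ht, rfl⟩
    exact ds_le hz ⟨t, ⟨hu.trans ht.1, ht.2.trans hw⟩, rfl⟩

lemma alphaIJ_pos_of_split {f g : ℝ → Plane} {aI bI aJ bJ c : ℝ} (hJab : aJ ≤ bJ)
    (hc₁ : aI ≤ c) (hc₂ : c ≤ bI) (hα : 0 < alphaIJ f g aI bI aJ bJ)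
    (hfc : ∃ β > 0, ∀ y ∈ g '' Set.Icc aJ bJ, β ≤ ‖f c - y‖) :
    0 < alphaIJ f g aI c aJ bJ ∧ 0 < alphaIJ f g c bI aJ bJ := by
  have hend : ∀ z ∈ ({f aI, f bI} : Set Plane),
      ∃ β > 0, ∀ y ∈ g '' Set.Icc aJ bJ, β ≤ ‖z - y‖ :=
    fun z hz => ⟨_, hα, fun y hy => alphaIJ_le_norm_sub hz hy⟩
  refine ⟨alphaIJ_pos_of_subinterval hJab le_rfl hc₁ hc₂ hα ?_,
    alphaIJ_pos_of_subinterval hJab hc₁ hc₂ le_rfl hα ?_⟩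
  · rintro z (rfl | rfl)
    exacts [hend _ (by simp), hfc]
  · rintro z (rfl | rfl)
    exacts [hfc, hend _ (by simp)]

lemma exists_two_zpow_neg_lt {ε : ℝ} (hε : 0 < ε) : ∃ n : ℕ, (2 : ℝ) ^ (-(n : ℤ)) < ε := by
  obtain ⟨n, hn⟩ := exists_pow_lt_of_lt_one hε (by norm_num : (1 / 2 : ℝ) < 1)
  exact ⟨n, by rwa [zpow_neg, zpow_natCast, ← inv_pow, ← one_div]⟩

theorem parity_additive_under_splitting_general (f g : ℝ → Plane)
    (hg : ContinuousOn g (Set.Icc (-1:ℝ) 2))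
    (md : ℕ → ℕ)
    (aI bI aJ bJ c : ℝ) (hJab : aJ ≤ bJ)
    (hJ : Set.Icc aJ bJ ⊆ Set.Icc (-1:ℝ) 2)
    (hα : 0 < alphaIJ f g aI bI aJ bJ)
    (hc1 : aI < c) (hc2 : c < bI) (hfc : f c ∉ g '' Set.Icc aJ bJ)
    (b b₁ b₂ : ℕ)
    (hb : ParityIs f g md aI bI aJ bJ b)
    (hb₁ : ParityIs f g md aI c aJ bJ b₁)
    (hb₂ : ParityIs f g md c bI aJ bJ b₂) :
    b = (b₁ + b₂) % 2 := by
  obtain ⟨β, hβ, hfc'⟩ := exists_pos_forall_le_dist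
    (isCompact_Icc.image_of_continuousOn (hg.mono hJ)).isClosed hfc
  obtain ⟨hα₁, hα₂⟩ := alphaIJ_pos_of_split hJab hc1.le hc2.le hα
    ⟨β, hβ, fun y hy => dist_eq_norm (f c) y ▸ hfc' y hy⟩
  obtain ⟨n, hn⟩ := exists_two_zpow_neg_lt
    (div_pos (lt_min (lt_min hα hα₁) hα₂) (by norm_num : (0 : ℝ) < 16))
  have hsmall : ∀ a, min (min (alphaIJ f g aI bI aJ bJ) (alphaIJ f g aI c aJ bJ))
      (alphaIJ f g c bI aJ bJ) ≤ a → (2 : ℝ) ^ (-(n : ℤ)) < a / 16 :=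
    fun a ha => hn.trans_le (by gcongr)
  obtain ⟨p, q, N, hN, hpN, hp, hq, hpq⟩ := exists_wsep_approx f g md n hc1.le hc2.le hJab
  rw [← hb n (hsmall _ (by simp)) p q hp hq hpq, hpq.par_eq_par_take_add_par_drop hN,
    hb₁ n (hsmall _ (by simp)) _ q (hpN ▸ hp.take hN) hq (hpq.take hN),
    hb₂ n (hsmall _ (by simp)) _ q (hpN ▸ hp.drop hN) hq (hpq.drop hN)]

theorem parity_additive_under_splitting (f g : ℝ → Plane)
    (hf : ContinuousOn f (Set.Icc (-1:ℝ) 2)) (hg : ContinuousOn g (Set.Icc (-1:ℝ) 2))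
    (md : ℕ → ℕ) (hmd : IsModulus2 f g md)
    (aI bI aJ bJ c : ℝ) (hIab : aI ≤ bI) (hJab : aJ ≤ bJ)
    (hI : Set.Icc aI bI ⊆ Set.Icc (-1:ℝ) 2) (hJ : Set.Icc aJ bJ ⊆ Set.Icc (-1:ℝ) 2)
    (hα : 0 < alphaIJ f g aI bI aJ bJ)
    (hc1 : aI < c) (hc2 : c < bI) (hfc : f c ∉ g '' Set.Icc aJ bJ)
    (b b₁ b₂ : ℕ)
    (hb : ParityIs f g md aI bI aJ bJ b)
    (hb₁ : ParityIs f g md aI c aJ bJ b₁)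
    (hb₂ : ParityIs f g md c bI aJ bJ b₂) :
    b = (b₁ + b₂) % 2 :=
  parity_additive_under_splitting_general f g hg md aI bI aJ bJ c hJab hJ hα hc1 hc2 hfc b b₁ b₂ hb
    hb₁ hb₂

end
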